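/- The minimum radiated power needed to sustain a given rate is convex and strictly increasing: fix a nonzero complex channel matrix H ∈ ℂ^{m×n} and W > 0, and for R ≥ 0 define P_min(R) := inf{ Re(Tr Q) : Q ∈ ℂ^{n×n} positive semidefinite, R ≤ W·log₂ Re(det(I + H Q Hᴴ)) }. Then P_min(0) = 0, P_min is convex on [0,∞), and P_min is strictly increasing on [0,∞). -/

import Mathlib

open Matrix
open scoped ComplexOrder

/-- Minimum radiated power needed to sustain rate `R` over the channel `H` with
bandwidth `W`. -/
noncomputable def Pmin {m n : ℕ} (H : Matrix (Fin m) (Fin n) ℂ) (W : ℝ) (R : ℝ) : ℝ :=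
  sInf { P : ℝ | ∃ Q : Matrix (Fin n) (Fin n) ℂ, Q.PosSemidef ∧
    R ≤ W * Real.logb 2 (((1 : Matrix (Fin m) (Fin m) ℂ) + H * Q * Hᴴ).det.re) ∧
    P = (Matrix.trace Q).re }

/-!
A power `P` is feasible at rate `R` if `P = Re tr Q` for some `Q ⪰ 0` whose rate
`W log₂ det (1 + H Q Hᴴ)` is at least `R`. Concavity of `log det` on positive definite matrices
makes the rate concave in `Q`, so mixing feasible covariances with weights `a, b` gives the
power `a P₁ + b P₂` at rate `a R₁ + b R₂`: the infimum `P_min` is convex, and `Q = 0` gives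
`P_min(0) = 0`. Every rate is reached by some `Q = t • 1`, since `det (1 + M) ≥ 1 + tr M`, so
these infima are not the junk value `sInf ∅ = 0`. Conversely `det (1 + M) ≤ exp (tr M)` and
`tr (H Q Hᴴ) ≤ tr (Hᴴ H) tr Q` show that a rate `R > 0` costs power at least
`R log 2 / (W tr (Hᴴ H)) > 0`; a convex function that vanishes at `0` and is positive to its
right is strictly increasing there.
-/

open Finset
open scoped Pointwise

theorem Finset.one_add_sum_le_prod_one_add {ι R : Type*} [CommSemiring R] [PartialOrder R]
    [IsOrderedRing R] (s : Finset ι) {f : ι → R} (hf : ∀ i ∈ s, 0 ≤ f i) :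
    1 + ∑ i ∈ s, f i ≤ ∏ i ∈ s, (1 + f i) := by
  classical
  induction s using Finset.induction_on with
  | empty => simp
  | insert a s ha ih =>
    rw [sum_insert ha, prod_insert ha]
    have hfa := hf a (mem_insert_self a s)
    have hs := ih fun i hi => hf i (mem_insert_of_mem hi)
    calc 1 + (f a + ∑ i ∈ s, f i) ≤ 1 + (f a + ∑ i ∈ s, f i) + f a * ∑ i ∈ s, f i :=
          le_add_of_nonneg_right
            (mul_nonneg hfa (sum_nonneg fun i hi => hf i (mem_insert_of_mem hi)))
      _ = (1 + f a) * (1 + ∑ i ∈ s, f i) := by ring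
      _ ≤ (1 + f a) * ∏ i ∈ s, (1 + f i) :=
          mul_le_mul_of_nonneg_left hs (add_nonneg zero_le_one hfa)

namespace Matrix

variable {𝕜 n : Type*} [RCLike 𝕜] [Fintype n]

theorem PosSemidef.re_diag_le_re_trace {A : Matrix n n 𝕜} (hA : A.PosSemidef) (i : n) :
    RCLike.re (A i i) ≤ RCLike.re A.trace := by
  rw [trace, map_sum]
  exact single_le_sum (f := fun j => RCLike.re (A j j))
    (fun j _ => (RCLike.nonneg_iff.mp hA.diag_nonneg).1) (mem_univ i)

theorem re_trace_conjTranspose_mul_self_pos {m : Type*} [Fintype m] {A : Matrix m n 𝕜}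
    (hA : A ≠ 0) : 0 < RCLike.re (Aᴴ * A).trace :=
  (RCLike.pos_iff.mp ((posSemidef_conjTranspose_mul_self A).trace_nonneg.lt_of_ne
    (Ne.symm (trace_conjTranspose_mul_self_eq_zero_iff.not.mpr hA)))).1

variable [DecidableEq n] {M : Matrix n n 𝕜}

theorem IsHermitian.det_smul_one_add_smul (hM : M.IsHermitian) (a b : ℝ) :
    det (a • 1 + b • M) = ∏ i, ((a + b * hM.eigenvalues i : ℝ) : 𝕜) := by
  set U : Matrix n n 𝕜 := (hM.eigenvectorUnitary : Matrix n n 𝕜)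
  have hUU : U * star U = 1 := Unitary.mul_star_self_of_mem hM.eigenvectorUnitary.2
  have hconj : a • 1 + b • M =
      U * diagonal (fun i => ((a + b * hM.eigenvalues i : ℝ) : 𝕜)) * star U := by
    have hdiag : diagonal (fun i => ((a + b * hM.eigenvalues i : ℝ) : 𝕜)) =
        a • 1 + b • diagonal (RCLike.ofReal ∘ hM.eigenvalues) := by
      ext i j
      by_cases h : i = j <;> simp [h, RCLike.real_smul_eq_coe_mul]
    conv_lhs => rw [hM.spectral_theorem, Unitary.conjStarAlgAut_apply]
    rw [hdiag, Matrix.mul_add, Matrix.add_mul, Matrix.mul_smul, Matrix.smul_mul, Matrix.mul_smul,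
      Matrix.smul_mul, Matrix.mul_one, hUU]
  rw [hconj, det_mul, det_mul, mul_right_comm, ← det_mul, hUU, det_one, one_mul, det_diagonal]

theorem PosSemidef.re_trace_mul_le {A B : Matrix n n 𝕜} (hA : A.PosSemidef) (hB : B.PosSemidef) :
    RCLike.re (A * B).trace ≤ RCLike.re A.trace * RCLike.re B.trace := by
  set U : Matrix n n 𝕜 := (hB.1.eigenvectorUnitary : Matrix n n 𝕜)
  have hUU : U * star U = 1 := Unitary.mul_star_self_of_mem hB.1.eigenvectorUnitary.2
  set C := star U * A * U
  have hC : C.PosSemidef := hA.conjTranspose_mul_mul_same U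
  have htrC : C.trace = A.trace := by rw [trace_mul_cycle, hUU, Matrix.one_mul]
  have htrAB : (A * B).trace = ∑ i, C i i * (hB.1.eigenvalues i : 𝕜) := by
    conv_lhs => rw [hB.1.spectral_theorem, Unitary.conjStarAlgAut_apply]
    rw [← Matrix.mul_assoc, ← Matrix.mul_assoc, trace_mul_comm, ← Matrix.mul_assoc,
      ← Matrix.mul_assoc]
    simp only [trace, diag_apply, mul_diagonal, Function.comp_apply]
    rfl
  have htrB : RCLike.re B.trace = ∑ i, hB.1.eigenvalues i := by
    simp [hB.1.trace_eq_sum_eigenvalues]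
  rw [htrAB, htrB, ← htrC, map_sum, mul_sum]
  refine sum_le_sum fun i _ => ?_
  rw [RCLike.re_mul_ofReal]
  exact mul_le_mul_of_nonneg_right (hC.re_diag_le_re_trace i) (hB.eigenvalues_nonneg i)

theorem IsHermitian.ofReal_re_det {A : Matrix n n 𝕜} (hA : A.IsHermitian) :
    ((RCLike.re A.det : ℝ) : 𝕜) = A.det :=
  RCLike.conj_eq_iff_re.mp (by rw [← RCLike.star_def, ← det_conjTranspose, hA.eq])

theorem IsHermitian.re_det_one_add (hM : M.IsHermitian) :
    RCLike.re (det (1 + M)) = ∏ i, (1 + hM.eigenvalues i) := by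
  have h := hM.det_smul_one_add_smul 1 1
  rw [one_smul, one_smul] at h
  rw [h, ← RCLike.ofReal_prod, RCLike.ofReal_re]
  simp only [one_mul]

theorem PosSemidef.one_add_re_trace_le_re_det_one_add (hM : M.PosSemidef) :
    1 + RCLike.re M.trace ≤ RCLike.re (det (1 + M)) := by
  rw [hM.1.re_det_one_add, hM.1.trace_eq_sum_eigenvalues, ← RCLike.ofReal_sum, RCLike.ofReal_re]
  exact one_add_sum_le_prod_one_add univ fun i _ => hM.eigenvalues_nonneg i

theorem PosSemidef.re_det_one_add_le_exp_re_trace (hM : M.PosSemidef) :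
    RCLike.re (det (1 + M)) ≤ Real.exp (RCLike.re M.trace) := by
  rw [hM.1.re_det_one_add, hM.1.trace_eq_sum_eigenvalues, ← RCLike.ofReal_sum, RCLike.ofReal_re,
    Real.exp_sum]
  exact prod_le_prod (fun i _ => by linarith [hM.eigenvalues_nonneg i])
    fun i _ => by linarith [Real.add_one_le_exp (hM.1.eigenvalues i)]

theorem PosSemidef.re_det_rpow_le_re_det_smul_one_add_smul (hM : M.PosSemidef) {a b : ℝ}
    (ha : 0 ≤ a) (hb : 0 ≤ b) (hab : a + b = 1) :
    RCLike.re M.det ^ b ≤ RCLike.re (det (a • 1 + b • M)) := by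
  rw [hM.1.det_smul_one_add_smul, hM.1.det_eq_prod_eigenvalues, ← RCLike.ofReal_prod,
    ← RCLike.ofReal_prod, RCLike.ofReal_re, RCLike.ofReal_re,
    ← Real.finsetProd_rpow _ _ fun i _ => hM.eigenvalues_nonneg i]
  refine prod_le_prod (fun i _ => Real.rpow_nonneg (hM.eigenvalues_nonneg i) b) fun i _ => ?_
  simpa using
    Real.geom_mean_le_arith_mean2_weighted ha hb zero_le_one (hM.eigenvalues_nonneg i) hab

open scoped MatrixOrder in
theorem PosDef.re_det_rpow_mul_rpow_le {A B : Matrix n n 𝕜} (hA : A.PosDef) (hB : B.PosSemidef)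
    {a b : ℝ} (ha : 0 ≤ a) (hb : 0 ≤ b) (hab : a + b = 1) :
    RCLike.re A.det ^ a * RCLike.re B.det ^ b ≤ RCLike.re (det (a • A + b • B)) := by
  -- congruence by `√A` reduces to the case `A = 1`
  set S := CFC.sqrt A
  have hSS : S * S = A := CFC.sqrt_mul_sqrt_self A hA.posSemidef.nonneg
  have hSH : Sᴴ = S := (CFC.sqrt_nonneg A).posSemidef.isHermitian
  have hS : IsUnit S.det :=
    (isUnit_iff_isUnit_det S).mp
      (CFC.isUnit_sqrt_iff_isStrictlyPositive.mpr hA.isStrictlyPositive)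
  set M := S⁻¹ * B * S⁻¹
  have hM : M.PosSemidef := by
    simpa only [conjTranspose_nonsing_inv, hSH] using hB.conjTranspose_mul_mul_same S⁻¹
  have hSMS : S * M * S = B := by
    rw [Matrix.mul_assoc, nonsing_inv_mul_cancel_right _ _ hS, mul_nonsing_inv_cancel_left _ _ hS]
  have hmix : a • A + b • B = S * (a • 1 + b • M) * S := by
    rw [Matrix.mul_add, Matrix.add_mul, Matrix.mul_smul, Matrix.smul_mul, Matrix.mul_smul,
      Matrix.smul_mul, Matrix.mul_one, hSS, hSMS]
  have hre_det (X : Matrix n n 𝕜) :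
      RCLike.re (det (S * X * S)) = RCLike.re A.det * RCLike.re X.det := by
    rw [det_mul, det_mul, mul_right_comm, ← det_mul, hSS, ← hA.1.ofReal_re_det,
      RCLike.re_ofReal_mul, RCLike.ofReal_re]
  have hdetA : 0 < RCLike.re A.det := (RCLike.pos_iff.mp hA.det_pos).1
  -- `(det A)^a (det A · det M)^b = det A · (det M)^b` because `a + b = 1`
  rw [hmix, ← hSMS, hre_det, hre_det,
    Real.mul_rpow hdetA.le (RCLike.nonneg_iff.mp hM.det_nonneg).1, ← mul_assoc,
    ← Real.rpow_add hdetA, hab, Real.rpow_one]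
  exact mul_le_mul_of_nonneg_left (hM.re_det_rpow_le_re_det_smul_one_add_smul ha hb hab) hdetA.le

end Matrix

theorem convexOn_sInf_of_smul_add_smul_subset {E : Type*} [AddCommGroup E] [Module ℝ E]
    {s : Set E} (hs : Convex ℝ s) {F : E → Set ℝ} (hne : ∀ x ∈ s, (F x).Nonempty)
    (hbdd : ∀ x ∈ s, BddBelow (F x))
    (hF : ∀ x ∈ s, ∀ y ∈ s, ∀ ⦃a b : ℝ⦄, 0 ≤ a → 0 ≤ b → a + b = 1 →
      a • F x + b • F y ⊆ F (a • x + b • y)) :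
    ConvexOn ℝ s fun x => sInf (F x) := by
  refine ⟨hs, fun x hx y hy a b ha hb hab => ?_⟩
  calc sInf (F (a • x + b • y)) ≤ sInf (a • F x + b • F y) :=
        csInf_le_csInf (hbdd _ (hs hx hy ha hb hab))
          ((hne x hx).smul_set.add (hne y hy).smul_set) (hF x hx y hy ha hb hab)
    _ = a • sInf (F x) + b • sInf (F y) := by
        rw [csInf_add (hne x hx).smul_set ((hbdd x hx).smul_of_nonneg ha) (hne y hy).smul_set
          ((hbdd y hy).smul_of_nonneg hb), Real.sInf_smul_of_nonneg ha,
          Real.sInf_smul_of_nonneg hb]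

theorem ConvexOn.strictMonoOn_Ici {f : ℝ → ℝ} {a : ℝ} (hf : ConvexOn ℝ (Set.Ici a) f)
    (hlt : ∀ x, a < x → f a < f x) : StrictMonoOn f (Set.Ici a) := by
  intro x hx y hy hxy
  rcases (Set.mem_Ici.mp hx).eq_or_lt with rfl | hax
  · exact hlt y hxy
  · refine hf.lt_right_of_left_lt Set.self_mem_Ici hy ?_ (hlt x hax)
    rw [openSegment_eq_Ioo (hax.trans hxy)]
    exact ⟨hax, hxy⟩

section ChannelRate

variable {ι κ : Type*} [Fintype ι] [Fintype κ] [DecidableEq ι]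

noncomputable def channelRate (H : Matrix ι κ ℂ) (W : ℝ) (Q : Matrix κ κ ℂ) : ℝ :=
  W * Real.logb 2 (det (1 + H * Q * Hᴴ)).re

/-- `Pmin H W R` unfolds to `sInf (feasiblePowers H W R)`. -/
def feasiblePowers (H : Matrix ι κ ℂ) (W R : ℝ) : Set ℝ :=
  {P | ∃ Q : Matrix κ κ ℂ, Q.PosSemidef ∧ R ≤ channelRate H W Q ∧ P = Q.trace.re}

variable (H : Matrix ι κ ℂ) {W : ℝ}

theorem posDef_one_add_mul_mul_conjTranspose {Q : Matrix κ κ ℂ} (hQ : Q.PosSemidef) :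
    (1 + H * Q * Hᴴ).PosDef :=
  PosDef.one.add_posSemidef (hQ.mul_mul_conjTranspose_same H)

theorem channelRate_zero : channelRate H W 0 = 0 := by
  simp [channelRate]

theorem concaveOn_channelRate (hW : 0 ≤ W) :
    ConcaveOn ℝ {Q : Matrix κ κ ℂ | Q.PosSemidef} (channelRate H W) := by
  refine ⟨fun Q₁ hQ₁ Q₂ hQ₂ a b ha hb _ => (hQ₁.smul ha).add (hQ₂.smul hb),
    fun Q₁ hQ₁ Q₂ hQ₂ a b ha hb hab => ?_⟩
  have hA := posDef_one_add_mul_mul_conjTranspose H hQ₁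
  have hB := posDef_one_add_mul_mul_conjTranspose H hQ₂
  have hdetA : 0 < (det (1 + H * Q₁ * Hᴴ)).re := (Complex.pos_iff.mp hA.det_pos).1
  have hdetB : 0 < (det (1 + H * Q₂ * Hᴴ)).re := (Complex.pos_iff.mp hB.det_pos).1
  have hmix : 1 + H * (a • Q₁ + b • Q₂) * Hᴴ =
      a • (1 + H * Q₁ * Hᴴ) + b • (1 + H * Q₂ * Hᴴ) := by
    rw [smul_add, smul_add, add_add_add_comm, ← add_smul, hab, one_smul, Matrix.mul_add,
      Matrix.add_mul, Matrix.mul_smul, Matrix.smul_mul, Matrix.mul_smul, Matrix.smul_mul]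
  calc a • channelRate H W Q₁ + b • channelRate H W Q₂
      = W * Real.logb 2 ((det (1 + H * Q₁ * Hᴴ)).re ^ a * (det (1 + H * Q₂ * Hᴴ)).re ^ b) := by
        rw [Real.logb_mul (Real.rpow_pos_of_pos hdetA a).ne' (Real.rpow_pos_of_pos hdetB b).ne',
          Real.logb_rpow_eq_mul_logb_of_pos hdetA, Real.logb_rpow_eq_mul_logb_of_pos hdetB]
        simp only [channelRate, smul_eq_mul]
        ring
    _ ≤ channelRate H W (a • Q₁ + b • Q₂) := by
        rw [channelRate, hmix]
        exact mul_le_mul_of_nonneg_left (Real.logb_le_logb_of_le one_lt_two (by positivity)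
          (hA.re_det_rpow_mul_rpow_le hB.posSemidef ha hb hab)) hW

theorem channelRate_mul_log_two_le [DecidableEq κ] (hW : 0 ≤ W) {Q : Matrix κ κ ℂ}
    (hQ : Q.PosSemidef) :
    channelRate H W Q * Real.log 2 ≤ W * (Hᴴ * H).trace.re * Q.trace.re := by
  have hM := hQ.mul_mul_conjTranspose_same H
  have hlog : Real.log (det (1 + H * Q * Hᴴ)).re ≤ (H * Q * Hᴴ).trace.re :=
    (Real.log_le_iff_le_exp (Complex.pos_iff.mp
      (posDef_one_add_mul_mul_conjTranspose H hQ).det_pos).1).mpr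
      hM.re_det_one_add_le_exp_re_trace
  have htr : (H * Q * Hᴴ).trace.re ≤ (Hᴴ * H).trace.re * Q.trace.re := by
    rw [trace_mul_cycle]
    exact (posSemidef_conjTranspose_mul_self H).re_trace_mul_le hQ
  rw [channelRate, Real.logb, mul_div_assoc', div_mul_cancel₀ _ (Real.log_pos one_lt_two).ne',
    mul_assoc]
  exact mul_le_mul_of_nonneg_left (hlog.trans htr) hW

theorem logb_one_add_le_channelRate_smul_one [DecidableEq κ] (hW : 0 ≤ W) {t : ℝ}
    (ht : 0 ≤ t) :
    W * Real.logb 2 (1 + t * (Hᴴ * H).trace.re) ≤ channelRate H W (t • 1) := by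
  rw [trace_mul_comm]
  have hM : (t • (H * Hᴴ)).PosSemidef := (posSemidef_self_mul_conjTranspose H).smul ht
  have hpos : 0 < 1 + t * (H * Hᴴ).trace.re :=
    add_pos_of_pos_of_nonneg one_pos
      (mul_nonneg ht (Complex.nonneg_iff.mp (posSemidef_self_mul_conjTranspose H).trace_nonneg).1)
  rw [channelRate, Matrix.mul_smul, Matrix.mul_one, Matrix.smul_mul]
  refine mul_le_mul_of_nonneg_left (Real.logb_le_logb_of_le one_lt_two hpos ?_) hW
  simpa [trace_smul] using hM.one_add_re_trace_le_re_det_one_add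

theorem nonneg_of_mem_feasiblePowers {R P : ℝ} (hP : P ∈ feasiblePowers H W R) : 0 ≤ P := by
  obtain ⟨Q, hQ, -, rfl⟩ := hP
  exact (Complex.nonneg_iff.mp hQ.trace_nonneg).1

theorem bddBelow_feasiblePowers (R : ℝ) : BddBelow (feasiblePowers H W R) :=
  ⟨0, fun _ => nonneg_of_mem_feasiblePowers H⟩

theorem zero_mem_feasiblePowers {R : ℝ} (hR : R ≤ 0) : 0 ∈ feasiblePowers H W R :=
  ⟨0, PosSemidef.zero, by rwa [channelRate_zero], by simp⟩

theorem smul_add_smul_feasiblePowers_subset (hW : 0 ≤ W) {R₁ R₂ a b : ℝ} (ha : 0 ≤ a)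
    (hb : 0 ≤ b) (hab : a + b = 1) :
    a • feasiblePowers H W R₁ + b • feasiblePowers H W R₂ ⊆
      feasiblePowers H W (a • R₁ + b • R₂) := by
  rintro _ ⟨_, ⟨_, ⟨Q₁, hQ₁, hR₁, rfl⟩, rfl⟩, _, ⟨_, ⟨Q₂, hQ₂, hR₂, rfl⟩, rfl⟩, rfl⟩
  refine ⟨a • Q₁ + b • Q₂, (hQ₁.smul ha).add (hQ₂.smul hb), ?_, by simp [trace_add, trace_smul]⟩
  calc a • R₁ + b • R₂ ≤ a • channelRate H W Q₁ + b • channelRate H W Q₂ := by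
        simp only [smul_eq_mul]; gcongr
    _ ≤ channelRate H W (a • Q₁ + b • Q₂) := (concaveOn_channelRate H hW).2 hQ₁ hQ₂ ha hb hab

theorem feasiblePowers_nonempty [DecidableEq κ] (hH : H ≠ 0) (hW : 0 < W) (R : ℝ) :
    (feasiblePowers H W R).Nonempty := by
  have hc : 0 < (Hᴴ * H).trace.re := re_trace_conjTranspose_mul_self_pos hH
  set t := 2 ^ (R / W) / (Hᴴ * H).trace.re
  have ht : 0 ≤ t := by positivity
  refine ⟨_, t • 1, PosSemidef.one.smul ht, ?_, rfl⟩
  calc R = W * Real.logb 2 (2 ^ (R / W)) := by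
        rw [Real.logb_rpow two_pos (by norm_num)]; field_simp
    _ ≤ W * Real.logb 2 (1 + t * (Hᴴ * H).trace.re) := by
        refine mul_le_mul_of_nonneg_left
          (Real.logb_le_logb_of_le one_lt_two (by positivity) ?_) hW.le
        rw [div_mul_cancel₀ _ hc.ne']
        linarith
    _ ≤ channelRate H W (t • 1) := logb_one_add_le_channelRate_smul_one H hW.le ht

end ChannelRate

section Pmin

variable {m n : ℕ} (H : Matrix (Fin m) (Fin n) ℂ) {W : ℝ}

theorem Pmin_nonneg (R : ℝ) : 0 ≤ Pmin H W R :=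
  Real.sInf_nonneg fun _ => nonneg_of_mem_feasiblePowers H

theorem Pmin_zero : Pmin H W 0 = 0 :=
  (csInf_le (bddBelow_feasiblePowers H 0) (zero_mem_feasiblePowers H le_rfl)).antisymm
    (Pmin_nonneg H 0)

theorem convexOn_Pmin (hH : H ≠ 0) (hW : 0 < W) : ConvexOn ℝ (Set.Ici 0) (Pmin H W) :=
  convexOn_sInf_of_smul_add_smul_subset (convex_Ici 0)
    (fun R _ => feasiblePowers_nonempty H hH hW R) (fun R _ => bddBelow_feasiblePowers H R)
    fun _ _ _ _ _ _ ha hb hab => smul_add_smul_feasiblePowers_subset H hW.le ha hb hab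

theorem Pmin_pos (hH : H ≠ 0) (hW : 0 < W) {R : ℝ} (hR : 0 < R) : 0 < Pmin H W R := by
  have hc : 0 < (Hᴴ * H).trace.re := re_trace_conjTranspose_mul_self_pos hH
  refine (by positivity : 0 < R * Real.log 2 / (W * (Hᴴ * H).trace.re)).trans_le
    (le_csInf (feasiblePowers_nonempty H hH hW R) ?_)
  rintro _ ⟨Q, hQ, hRQ, rfl⟩
  rw [div_le_iff₀' (mul_pos hW hc)]
  calc R * Real.log 2 ≤ channelRate H W Q * Real.log 2 :=
        mul_le_mul_of_nonneg_right hRQ (Real.log_nonneg one_le_two)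
    _ ≤ W * (Hᴴ * H).trace.re * Q.trace.re := channelRate_mul_log_two_le H hW.le hQ

end Pmin

/-- For a nonzero channel, the minimum radiated power needed to sustain a rate satisfies
`P_min(0) = 0`, is convex on `[0,∞)`, and is strictly increasing on `[0,∞)`. -/
theorem Pmin_zero_convex_strictMono (m n : ℕ) (H : Matrix (Fin m) (Fin n) ℂ)
    (hH : H ≠ 0) (W : ℝ) (hW : 0 < W) :
    Pmin H W 0 = 0 ∧ ConvexOn ℝ (Set.Ici (0 : ℝ)) (Pmin H W) ∧
      StrictMonoOn (Pmin H W) (Set.Ici (0 : ℝ)) :=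
  ⟨Pmin_zero H, convexOn_Pmin H hH hW, (convexOn_Pmin H hH hW).strictMonoOn_Ici fun _ hR => by
    rw [Pmin_zero]; exact Pmin_pos H hH hW hR⟩
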